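/- Faithfulness criterion via a combinatorial section (Krammer's Lemma 3.6): Let B_n act on a set U, and suppose there exist non-empty pairwise disjoint subsets {C_x ⊆ U}_{x ∈ Ω} such that x·C_y ⊆ C_{LF(xy)} for all x, y ∈ Ω. Then the action of B_n on U is faithful. -/

import Mathlib

def braidRels (n : ℕ) : Set (FreeGroup (Fin n)) :=
  {r | (∃ i j : Fin n, (i : ℕ) + 2 ≤ (j : ℕ) ∧
          r = .of i * .of j * (.of i)⁻¹ * (.of j)⁻¹) ∨
       (∃ i j : Fin n, (j : ℕ) = (i : ℕ) + 1 ∧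
          r = .of i * .of j * .of i * (.of j * .of i * .of j)⁻¹)}

abbrev BraidGroup (n : ℕ) : Type := PresentedGroup (braidRels n)

def adjTransposition (n : ℕ) (i : Fin n) : Equiv.Perm (Fin (n + 1)) :=
  Equiv.swap i.castSucc i.succ

noncomputable def wordLen (n : ℕ) (x : Equiv.Perm (Fin (n + 1))) : ℕ :=
  sInf {k | ∃ w : List (Fin n), w.length = k ∧ (w.map (adjTransposition n)).prod = x}

def posBraidMonoid (n : ℕ) : Submonoid (BraidGroup n) :=
  Submonoid.closure (Set.range fun i : Fin n => PresentedGroup.of (rels := braidRels n) i)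

/-!
A positive braid `x` sends `C 1` into some `C (r w)` with `r w` a left divisor of `x`, and
`r w ≠ 1` unless `x = 1`: induct on `x = σ_i y`, where `LF (σ_i r w')` is nontrivial because
`σ_i` left-divides `σ_i r w'`. If two positive braids agree on `C 1`, disjointness gives them the
same such divisor, which can be cancelled; as it lowers the exponent sum, positive braids are
determined by their action on `C 1`. An arbitrary braid is `x Δ⁻ᵏ` with `x` positive and
`Δ = r w₀` the half twist, since every `σ_i` left-divides `Δ` and `Δ` conjugates generators to
generators. Both facts come from `w₀` having a descent at every position, which is read off from
the identity `wordLen = #inversions`.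
-/

open Equiv

section Fraction

variable {G : Type*} [Group G] {S : Set G} {d : G}

theorem exists_mul_eq_mul_of_mem_closure
    (hconj : ∀ s ∈ S, ∃ s' ∈ Submonoid.closure S, s * d = d * s')
    {x : G} (hx : x ∈ Submonoid.closure S) : ∃ x' ∈ Submonoid.closure S, x * d = d * x' := by
  induction hx using Submonoid.closure_induction_left with
  | one => exact ⟨1, one_mem _, by simp⟩
  | mul_left s hs y _ ih =>
    obtain ⟨s', hs', hsd⟩ := hconj s hs
    obtain ⟨y', hy', hyd⟩ := ih
    exact ⟨s' * y', mul_mem hs' hy', by rw [mul_assoc, hyd, ← mul_assoc, hsd, mul_assoc]⟩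

/-- `s⁻¹ = p * d⁻¹` when `d = s * p`, and `d⁻¹` moves rightwards past positive words. -/
theorem exists_eq_mul_inv_pow_of_closure_eq_top (hS : Subgroup.closure S = ⊤)
    (hdiv : ∀ s ∈ S, ∃ p ∈ Submonoid.closure S, d = s * p)
    (hconj : ∀ s ∈ S, ∃ s' ∈ Submonoid.closure S, s * d = d * s') (g : G) :
    ∃ x ∈ Submonoid.closure S, ∃ k : ℕ, g = x * (d ^ k)⁻¹ := by
  have hg : g ∈ Subgroup.closure S := hS ▸ Subgroup.mem_top g
  induction hg using Subgroup.closure_induction_left with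
  | one => exact ⟨1, one_mem _, 0, by simp⟩
  | mul_left s hs y _ ih =>
    obtain ⟨x, hx, k, rfl⟩ := ih
    exact ⟨s * x, mul_mem (Submonoid.subset_closure hs) hx, k, (mul_assoc _ _ _).symm⟩
  | inv_mul_cancel s hs y _ ih =>
    obtain ⟨x, hx, k, rfl⟩ := ih
    obtain ⟨p, hp, hd⟩ := hdiv s hs
    obtain ⟨x', hx', hxd⟩ := exists_mul_eq_mul_of_mem_closure hconj hx
    refine ⟨p * x', mul_mem hp hx', k + 1, ?_⟩
    calc s⁻¹ * (x * (d ^ k)⁻¹) = p * d⁻¹ * (x * d) * d⁻¹ * (d ^ k)⁻¹ := by rw [hd]; group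
      _ = p * x' * (d ^ (k + 1))⁻¹ := by rw [hxd]; group

end Fraction

lemma eq_one_of_strictMono {m : ℕ} {w : Perm (Fin m)} (hw : StrictMono w) : w = 1 := by
  have := Subsingleton.elim (hw.orderIsoOfSurjective w w.surjective) (OrderIso.refl _)
  ext x
  exact congrArg Fin.val (DFunLike.congr_fun this x)

section Inversions

variable {m : ℕ}

def inversions (w : Perm (Fin m)) : Finset (Fin m × Fin m) :=
  Finset.univ.filter fun p => p.1 < p.2 ∧ w p.2 < w p.1

def numInversions (w : Perm (Fin m)) : ℕ := (inversions w).card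

lemma mem_inversions {w : Perm (Fin m)} {p : Fin m × Fin m} :
    p ∈ inversions w ↔ p.1 < p.2 ∧ w p.2 < w p.1 := by
  simp [inversions]

@[simp] lemma numInversions_one : numInversions (1 : Perm (Fin m)) = 0 := by
  simp only [numInversions, Finset.card_eq_zero, Finset.eq_empty_iff_forall_notMem,
    mem_inversions, Perm.one_apply]
  exact fun p h => h.1.asymm h.2

end Inversions

section AdjTransposition

variable {n : ℕ}

@[simp] lemma adjTransposition_mul_self (k : Fin n) :
    adjTransposition n k * adjTransposition n k = 1 :=
  swap_mul_self _ _

@[simp] lemma adjTransposition_apply_self (k : Fin n) (x : Fin (n + 1)) :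
    adjTransposition n k (adjTransposition n k x) = x :=
  swap_apply_self _ _ _

@[simp] lemma mul_adjTransposition_mul_self (w : Perm (Fin (n + 1))) (k : Fin n) :
    w * adjTransposition n k * adjTransposition n k = w := by
  rw [mul_assoc, adjTransposition_mul_self, mul_one]

lemma adjTransposition_lt_adjTransposition {k : Fin n} {i j : Fin (n + 1)} (hij : i < j)
    (hne : (i, j) ≠ (k.castSucc, k.succ)) :
    adjTransposition n k i < adjTransposition n k j := by
  simp only [ne_eq, Prod.mk.injEq, not_and_or, Fin.ext_iff] at hne
  simp only [adjTransposition, swap_apply_def, Fin.lt_def] at hij ⊢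
  split_ifs <;> simp only [Fin.ext_iff, Fin.val_castSucc, Fin.val_succ] at * <;> omega

lemma exists_descent {w : Perm (Fin (n + 1))} (hw : w ≠ 1) :
    ∃ k : Fin n, w k.succ < w k.castSucc := by
  contrapose! hw
  exact eq_one_of_strictMono <| Fin.strictMono_iff_lt_succ.mpr fun k =>
    (hw k).lt_of_ne fun h => Fin.castSucc_lt_succ.ne (w.injective h)

/-- The bijection is `(i, j) ↦ (s_k i, s_k j)`. -/
lemma card_inversions_mul_adjTransposition_erase (w : Perm (Fin (n + 1))) (k : Fin n) :
    ((inversions (w * adjTransposition n k)).erase (k.castSucc, k.succ)).card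
      = ((inversions w).erase (k.castSucc, k.succ)).card := by
  have maps : ∀ v : Perm (Fin (n + 1)),
      Set.MapsTo
        (fun p : Fin (n + 1) × Fin (n + 1) => (adjTransposition n k p.1, adjTransposition n k p.2))
        ((inversions (v * adjTransposition n k)).erase (k.castSucc, k.succ))
        ((inversions v).erase (k.castSucc, k.succ)) := by
    rintro v ⟨i, j⟩ hp
    simp only [Finset.coe_erase, Set.mem_sdiff, Set.mem_singleton_iff, Finset.mem_coe,
      mem_inversions] at hp ⊢
    obtain ⟨⟨hij, hinv⟩, hne⟩ := hp
    refine ⟨⟨adjTransposition_lt_adjTransposition hij hne, by simpa using hinv⟩, fun h => ?_⟩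
    simp only [Prod.mk.injEq] at h
    have hi : i = k.succ := by
      simpa [adjTransposition] using congrArg (adjTransposition n k) h.1
    have hj : j = k.castSucc := by
      simpa [adjTransposition] using congrArg (adjTransposition n k) h.2
    exact Fin.castSucc_lt_succ.asymm (hi ▸ hj ▸ hij)
  exact Finset.card_nbij' _ _ (maps w) (mul_adjTransposition_mul_self w k ▸ maps _)
    (fun p _ => by simp) (fun p _ => by simp)

lemma numInversions_mul_adjTransposition_of_lt {w : Perm (Fin (n + 1))} {k : Fin n}
    (h : w k.castSucc < w k.succ) :
    numInversions (w * adjTransposition n k) = numInversions w + 1 := by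
  have hmem : (k.castSucc, k.succ) ∈ inversions (w * adjTransposition n k) :=
    mem_inversions.mpr ⟨Fin.castSucc_lt_succ, by simpa [adjTransposition] using h⟩
  have hnmem : (k.castSucc, k.succ) ∉ inversions w := fun hc => (mem_inversions.mp hc).2.asymm h
  have he := card_inversions_mul_adjTransposition_erase w k
  rw [Finset.erase_eq_of_notMem hnmem, Finset.card_erase_of_mem hmem] at he
  have hpos := Finset.card_pos.mpr ⟨_, hmem⟩
  unfold numInversions
  omega

lemma numInversions_mul_adjTransposition_of_gt {w : Perm (Fin (n + 1))} {k : Fin n}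
    (h : w k.succ < w k.castSucc) :
    numInversions w = numInversions (w * adjTransposition n k) + 1 := by
  simpa using numInversions_mul_adjTransposition_of_lt (w := w * adjTransposition n k) (k := k)
    (by simpa [adjTransposition] using h)

lemma numInversions_mul_adjTransposition_le (w : Perm (Fin (n + 1))) (k : Fin n) :
    numInversions (w * adjTransposition n k) ≤ numInversions w + 1 := by
  rcases lt_or_gt_of_ne (w.injective.ne (Fin.castSucc_lt_succ (i := k)).ne) with h | h
  · exact (numInversions_mul_adjTransposition_of_lt h).le
  · have := numInversions_mul_adjTransposition_of_gt h
    omega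

lemma numInversions_prod_le (l : List (Fin n)) :
    numInversions (l.map (adjTransposition n)).prod ≤ l.length := by
  induction l using List.reverseRecOn with
  | nil => simp
  | append_singleton l k ih =>
    simpa using (numInversions_mul_adjTransposition_le _ k).trans (Nat.add_le_add_right ih 1)

lemma exists_prod_eq (w : Perm (Fin (n + 1))) :
    ∃ l : List (Fin n), (l.map (adjTransposition n)).prod = w := by
  obtain ⟨l, hl⟩ : w ∈ MonoidHom.mrange (FreeMonoid.lift (adjTransposition n)) := by
    rw [FreeMonoid.mrange_lift]
    exact (Perm.mclosure_swap_castSucc_succ n).symm ▸ Submonoid.mem_top w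
  exact ⟨l.toList, by rwa [FreeMonoid.lift_apply] at hl⟩

end AdjTransposition

section WordLength

variable {n : ℕ}

lemma wordLen_le_length {w : Perm (Fin (n + 1))} {l : List (Fin n)}
    (h : (l.map (adjTransposition n)).prod = w) : wordLen n w ≤ l.length :=
  Nat.sInf_le ⟨l, rfl, h⟩

lemma exists_prod_eq_of_length_eq_wordLen (w : Perm (Fin (n + 1))) :
    ∃ l : List (Fin n), l.length = wordLen n w ∧ (l.map (adjTransposition n)).prod = w :=
  let ⟨l, hl⟩ := exists_prod_eq w
  Nat.sInf_mem (s := {k | ∃ l : List (Fin n), l.length = k ∧ _}) ⟨l.length, l, rfl, hl⟩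

lemma wordLen_mul_adjTransposition_le (w : Perm (Fin (n + 1))) (k : Fin n) :
    wordLen n (w * adjTransposition n k) ≤ wordLen n w + 1 := by
  obtain ⟨l, hl, rfl⟩ := exists_prod_eq_of_length_eq_wordLen w
  exact (wordLen_le_length (l := l ++ [k]) (by simp)).trans (by simp [hl])

lemma numInversions_le_wordLen (w : Perm (Fin (n + 1))) : numInversions w ≤ wordLen n w := by
  obtain ⟨l, hl, rfl⟩ := exists_prod_eq_of_length_eq_wordLen w
  exact hl ▸ numInversions_prod_le l

lemma wordLen_le_numInversions (w : Perm (Fin (n + 1))) : wordLen n w ≤ numInversions w := by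
  by_cases hw : w = 1
  · simpa [hw] using wordLen_le_length (n := n) (l := []) rfl
  obtain ⟨k, hk⟩ := exists_descent hw
  have hdesc := numInversions_mul_adjTransposition_of_gt hk
  have ih := wordLen_le_numInversions (w * adjTransposition n k)
  have hstep := wordLen_mul_adjTransposition_le (w * adjTransposition n k) k
  rw [mul_adjTransposition_mul_self] at hstep
  omega
termination_by numInversions w
decreasing_by omega

theorem wordLen_eq_numInversions (w : Perm (Fin (n + 1))) : wordLen n w = numInversions w :=
  (wordLen_le_numInversions w).antisymm (numInversions_le_wordLen w)

@[simp] lemma wordLen_one : wordLen n (1 : Perm (Fin (n + 1))) = 0 := by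
  simp [wordLen_eq_numInversions]

@[simp] lemma wordLen_adjTransposition (k : Fin n) : wordLen n (adjTransposition n k) = 1 := by
  simpa [wordLen_eq_numInversions] using
    numInversions_mul_adjTransposition_of_lt (w := 1) (k := k) Fin.castSucc_lt_succ

lemma revPerm_mul_adjTransposition (i : Fin n) :
    Fin.revPerm * adjTransposition n i = adjTransposition n i.rev * Fin.revPerm := by
  rw [adjTransposition, adjTransposition, mul_swap_eq_swap_mul, swap_comm]
  simp [Fin.rev_castSucc, Fin.rev_succ]

lemma wordLen_revPerm (i : Fin n) :
    wordLen n Fin.revPerm = wordLen n (Fin.revPerm * adjTransposition n i) + 1 := by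
  simp only [wordLen_eq_numInversions]
  exact numInversions_mul_adjTransposition_of_gt <| by
    simpa only [Fin.revPerm_apply, Fin.rev_lt_rev] using Fin.castSucc_lt_succ

end WordLength

namespace BraidGroup

variable {n : ℕ}

lemma lift_braidRels_eq_one : ∀ r ∈ braidRels n,
    FreeGroup.lift (fun _ : Fin n => Multiplicative.ofAdd (1 : ℤ)) r = 1 := by
  rintro r (⟨i, j, -, rfl⟩ | ⟨i, j, -, rfl⟩) <;>
    simp only [map_mul, map_inv, FreeGroup.lift_apply_of] <;> group

def exponentSum (x : BraidGroup n) : ℤ :=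
  Multiplicative.toAdd (PresentedGroup.toGroup lift_braidRels_eq_one x)

@[simp] lemma exponentSum_one : exponentSum (1 : BraidGroup n) = 0 := by
  simp [exponentSum]

@[simp] lemma exponentSum_mul (x y : BraidGroup n) :
    exponentSum (x * y) = exponentSum x + exponentSum y := by
  simp [exponentSum]

@[simp] lemma exponentSum_of (i : Fin n) :
    exponentSum (PresentedGroup.of (rels := braidRels n) i) = 1 := by
  simp [exponentSum]

lemma exponentSum_prod_of (l : List (Fin n)) :
    exponentSum (l.map PresentedGroup.of).prod = l.length := by
  induction l with
  | nil => simp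
  | cons i l ih => simp [ih, add_comm]

lemma exponentSum_nonneg {x : BraidGroup n} (hx : x ∈ posBraidMonoid n) : 0 ≤ exponentSum x := by
  induction hx using Submonoid.closure_induction with
  | mem x hx => obtain ⟨i, rfl⟩ := hx; simp
  | one => simp
  | mul x y _ _ hx hy => rw [exponentSum_mul]; omega

lemma eq_one_of_exponentSum_eq_zero {x : BraidGroup n} (hx : x ∈ posBraidMonoid n)
    (h : exponentSum x = 0) : x = 1 := by
  induction hx using Submonoid.closure_induction with
  | mem x hx => obtain ⟨i, rfl⟩ := hx; simp at h
  | one => rfl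
  | mul x y hx hy ihx ihy =>
    rw [exponentSum_mul] at h
    have := exponentSum_nonneg hx
    have := exponentSum_nonneg hy
    rw [ihx (by omega), ihy (by omega), one_mul]

structure IsCanonicalSection (r : Perm (Fin (n + 1)) → BraidGroup n) : Prop where
  map_adjTransposition (i : Fin n) : r (adjTransposition n i) = PresentedGroup.of i
  map_mul_of_wordLen_mul (x y : Perm (Fin (n + 1))) :
    wordLen n (x * y) = wordLen n x + wordLen n y → r (x * y) = r x * r y

namespace IsCanonicalSection

variable {r : Perm (Fin (n + 1)) → BraidGroup n} (hr : IsCanonicalSection r)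
include hr

lemma map_prod_of_wordLen_eq_length {l : List (Fin n)}
    (hl : wordLen n (l.map (adjTransposition n)).prod = l.length) :
    r (l.map (adjTransposition n)).prod = (l.map PresentedGroup.of).prod := by
  induction l using List.reverseRecOn with
  | nil => simpa using hr.map_mul_of_wordLen_mul 1 1 (by simp)
  | append_singleton l k ih =>
    simp only [List.map_append, List.map_singleton, List.prod_append, List.prod_singleton,
      List.length_append, List.length_singleton] at hl ⊢
    have hle := wordLen_mul_adjTransposition_le (l.map (adjTransposition n)).prod k
    have hlen : wordLen n (l.map (adjTransposition n)).prod = l.length :=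
      (wordLen_le_length rfl).antisymm (by omega)
    rw [hr.map_mul_of_wordLen_mul _ _ (by rw [hl, hlen, wordLen_adjTransposition]), ih hlen,
      hr.map_adjTransposition]

lemma exists_eq_prod (w : Perm (Fin (n + 1))) :
    ∃ l : List (Fin n), l.length = wordLen n w ∧ r w = (l.map PresentedGroup.of).prod := by
  obtain ⟨l, hl, rfl⟩ := exists_prod_eq_of_length_eq_wordLen w
  exact ⟨l, hl, hr.map_prod_of_wordLen_eq_length hl.symm⟩

lemma map_one : r 1 = 1 := by
  simpa using hr.map_prod_of_wordLen_eq_length (l := []) (by simp)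

lemma mem_posBraidMonoid (w : Perm (Fin (n + 1))) : r w ∈ posBraidMonoid n := by
  obtain ⟨l, -, h⟩ := hr.exists_eq_prod w
  exact h ▸ list_prod_mem fun x hx => by
    obtain ⟨i, -, rfl⟩ := List.mem_map.mp hx
    exact Submonoid.subset_closure ⟨i, rfl⟩

lemma exponentSum_eq_wordLen (w : Perm (Fin (n + 1))) : exponentSum (r w) = wordLen n w := by
  obtain ⟨l, hl, h⟩ := hr.exists_eq_prod w
  rw [h, ← hl, exponentSum_prod_of]

lemma map_revPerm_eq_mul_of (i : Fin n) :
    r Fin.revPerm = r (Fin.revPerm * adjTransposition n i) * PresentedGroup.of i := by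
  have h := hr.map_mul_of_wordLen_mul (Fin.revPerm * adjTransposition n i) (adjTransposition n i)
    (by rw [mul_adjTransposition_mul_self, wordLen_adjTransposition, ← wordLen_revPerm])
  rwa [mul_adjTransposition_mul_self, hr.map_adjTransposition] at h

lemma map_revPerm_eq_of_mul (i : Fin n) :
    r Fin.revPerm = PresentedGroup.of i.rev * r (Fin.revPerm * adjTransposition n i) := by
  have hw : adjTransposition n i.rev * (Fin.revPerm * adjTransposition n i) = Fin.revPerm := by
    rw [revPerm_mul_adjTransposition, ← mul_assoc, adjTransposition_mul_self, one_mul]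
  have h := hr.map_mul_of_wordLen_mul (adjTransposition n i.rev)
    (Fin.revPerm * adjTransposition n i)
    (by rw [hw, wordLen_adjTransposition, wordLen_revPerm i, add_comm])
  rwa [hw, hr.map_adjTransposition] at h

lemma map_revPerm_mul_of (i : Fin n) :
    r Fin.revPerm * PresentedGroup.of i = PresentedGroup.of i.rev * r Fin.revPerm := by
  conv_lhs => rw [hr.map_revPerm_eq_of_mul i]
  rw [mul_assoc, ← hr.map_revPerm_eq_mul_of]

lemma exists_eq_mul_inv_pow (g : BraidGroup n) :
    ∃ x ∈ posBraidMonoid n, ∃ k : ℕ, g = x * (r Fin.revPerm ^ k)⁻¹ := by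
  refine exists_eq_mul_inv_pow_of_closure_eq_top (PresentedGroup.closure_range_of _) ?_ ?_ g
  · rintro _ ⟨i, rfl⟩
    exact ⟨_, hr.mem_posBraidMonoid _, by simpa using hr.map_revPerm_eq_of_mul i.rev⟩
  · rintro _ ⟨i, rfl⟩
    exact ⟨_, Submonoid.subset_closure ⟨i.rev, rfl⟩,
      by simpa using (hr.map_revPerm_mul_of i.rev).symm⟩

end IsCanonicalSection

section Action

variable {U : Type*} [MulAction (BraidGroup n) U]
  {r : Perm (Fin (n + 1)) → BraidGroup n} {LF : BraidGroup n → BraidGroup n}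
  {C : BraidGroup n → Set U}
  (hr : IsCanonicalSection r)
  (hLF : ∀ x ∈ posBraidMonoid n, ∃ x' : Perm (Fin (n + 1)),
    LF x = r x' ∧ (∃ z ∈ posBraidMonoid n, x = r x' * z) ∧
    ∀ y' : Perm (Fin (n + 1)),
      (∃ z ∈ posBraidMonoid n, x = r y' * z) → wordLen n y' ≤ wordLen n x')
  (hne : ∀ w ∈ Set.range r, (C w).Nonempty)
  (hdisj : ∀ w ∈ Set.range r, ∀ w' ∈ Set.range r, w ≠ w' → Disjoint (C w) (C w'))
  (hact : ∀ x ∈ Set.range r, ∀ y ∈ Set.range r, ∀ u ∈ C y, x • u ∈ C (LF (x * y)))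

include hr hLF hact in
theorem exists_smul_mem_of_mem_posBraidMonoid {x : BraidGroup n} (hx : x ∈ posBraidMonoid n)
    {u : U} (hu : u ∈ C 1) :
    ∃ w, x • u ∈ C (r w) ∧ (∃ z ∈ posBraidMonoid n, x = r w * z) ∧ (r w = 1 → x = 1) := by
  induction hx using Submonoid.closure_induction_left with
  | one => exact ⟨1, by simpa [hr.map_one] using hu, ⟨1, one_mem _, by simp [hr.map_one]⟩,
      fun _ => rfl⟩
  | mul_left s hs y _ ih =>
    obtain ⟨i, rfl⟩ := hs
    obtain ⟨w, hwu, ⟨z, hz, rfl⟩, -⟩ := ih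
    obtain ⟨v, hLFv, ⟨z', hz', hvz⟩, hmax⟩ :=
      hLF _ (mul_mem (Submonoid.subset_closure ⟨i, rfl⟩) (hr.mem_posBraidMonoid w))
    -- `σ_i` left-divides `σ_i * r w`, so by maximality `LF (σ_i * r w)` is not `r 1`
    have hv : 1 ≤ wordLen n v := wordLen_adjTransposition i ▸
      hmax _ ⟨r w, hr.mem_posBraidMonoid w, by rw [hr.map_adjTransposition]⟩
    refine ⟨v, ?_, ⟨z' * z, mul_mem hz' hz, by rw [← mul_assoc, hvz, mul_assoc]⟩, fun h => ?_⟩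
    · rw [mul_smul, ← hLFv]
      exact hact _ ⟨_, hr.map_adjTransposition i⟩ _ ⟨w, rfl⟩ _ hwu
    · have := hr.exponentSum_eq_wordLen v
      rw [h, exponentSum_one] at this
      omega

include hr hLF hne hdisj hact in
theorem eq_of_forall_mem_smul_eq {x y : BraidGroup n} (hx : x ∈ posBraidMonoid n)
    (hy : y ∈ posBraidMonoid n) (h : ∀ u ∈ C 1, x • u = y • u) : x = y := by
  obtain ⟨u₀, hu₀⟩ := hne 1 ⟨1, hr.map_one⟩
  obtain ⟨w, hxu, ⟨z, hz, hxz⟩, hx1⟩ := exists_smul_mem_of_mem_posBraidMonoid hr hLF hact hx hu₀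
  obtain ⟨w', hyu, ⟨z', hz', hyz⟩, hy1⟩ := exists_smul_mem_of_mem_posBraidMonoid hr hLF hact hy hu₀
  have hww : r w = r w' := by
    by_contra hne'
    exact Set.disjoint_left.mp (hdisj _ ⟨w, rfl⟩ _ ⟨w', rfl⟩ hne') hxu (h u₀ hu₀ ▸ hyu)
  by_cases h1 : r w = 1
  · rw [hx1 h1, hy1 (hww ▸ h1)]
  have hpos : 0 < exponentSum (r w) := (exponentSum_nonneg (hr.mem_posBraidMonoid w)).lt_of_ne'
    fun h0 => h1 (eq_one_of_exponentSum_eq_zero (hr.mem_posBraidMonoid w) h0)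
  have hz_nonneg := exponentSum_nonneg hz
  have hzz : ∀ u ∈ C 1, z • u = z' • u := fun u hu => by
    simpa [hxz, hyz, mul_smul, hww] using h u hu
  rw [hxz, hyz, hww, eq_of_forall_mem_smul_eq hz hz' hzz]
termination_by (exponentSum x).toNat
decreasing_by rw [hxz, exponentSum_mul]; omega

end Action

end BraidGroup

/-- Krammer's faithfulness criterion (Lemma 3.6): let the braid group `B_{n+1}` act on a
set `U`, let `r : S_{n+1} → B_{n+1}` be the canonical section with image `Ω`, and let `LF`
be the leftmost-factor map on the positive braid monoid. If there are nonempty pairwise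
disjoint subsets `{C_w ⊆ U}_{w ∈ Ω}` with `x • C_y ⊆ C_{LF(xy)}` for all `x, y ∈ Ω`, then
the action of `B_{n+1}` on `U` is faithful. -/
theorem krammer_faithfulness_criterion (n : ℕ) {U : Type*} [MulAction (BraidGroup n) U]
    (r : Equiv.Perm (Fin (n + 1)) → BraidGroup n)
    (hr1 : ∀ i : Fin n, r (adjTransposition n i) = PresentedGroup.of i)
    (hr2 : ∀ x y : Equiv.Perm (Fin (n + 1)),
      wordLen n (x * y) = wordLen n x + wordLen n y → r (x * y) = r x * r y)
    (LF : BraidGroup n → BraidGroup n)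
    (hLF : ∀ x ∈ posBraidMonoid n, ∃ x' : Equiv.Perm (Fin (n + 1)),
      LF x = r x' ∧ (∃ z ∈ posBraidMonoid n, x = r x' * z) ∧
      ∀ y' : Equiv.Perm (Fin (n + 1)),
        (∃ z ∈ posBraidMonoid n, x = r y' * z) → wordLen n y' ≤ wordLen n x')
    (C : BraidGroup n → Set U)
    (hne : ∀ w ∈ Set.range r, (C w).Nonempty)
    (hdisj : ∀ w ∈ Set.range r, ∀ w' ∈ Set.range r, w ≠ w' → Disjoint (C w) (C w'))
    (hact : ∀ x ∈ Set.range r, ∀ y ∈ Set.range r, ∀ u ∈ C y, x • u ∈ C (LF (x * y))) :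
    ∀ g h : BraidGroup n, (∀ u : U, g • u = h • u) → g = h := by
  intro g h hgh
  have hr : BraidGroup.IsCanonicalSection r := ⟨hr1, hr2⟩
  obtain ⟨x, hx, k, hg⟩ := hr.exists_eq_mul_inv_pow (g⁻¹ * h)
  have hx_eq : x = r Fin.revPerm ^ k := by
    refine BraidGroup.eq_of_forall_mem_smul_eq hr hLF hne hdisj hact hx
      (pow_mem (hr.mem_posBraidMonoid _) k) fun u _ => ?_
    have hfix : (g⁻¹ * h) • (r Fin.revPerm ^ k • u) = r Fin.revPerm ^ k • u := by
      rw [mul_smul, ← hgh, inv_smul_smul]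
    rwa [hg, mul_smul, inv_smul_smul] at hfix
  rwa [hx_eq, mul_inv_cancel, inv_mul_eq_one] at hg
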